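/- If x and y are basis elements of C(□^n) satisfying x ≤ y in the componentwise partial order, then CS(x ∗ y) = CS(x) ∗ CS(y), where the join on the left is the cubical join and on the right the simplicial join. -/

import Mathlib

/-!
For `x ≤ y` the only joins of factors that survive are `[0] ∗ [1]`, so `x ∗ y` is a signed sum,
over positions `l` with `x_l = [0]` and `y_l = [1]`, of the cells `x_{<l} ⊗ [0,1] ⊗ y_{>l}`.
`CS` kills all of them except possibly the one at the first `[0]` of `x`, and that one survives
exactly when every `[0,1]` of `x` lies before `l`, every `[0,1]` of `y` after `l`, and
`CS(x), CS(y) ≠ 0`. Then the vertices of `CS(x)` are `≤ l` and those of `CS(y)` are `> l`, so the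
simplicial join is the plain union with sign `(-1)^{|x|}`, the sign of the cubical join.
Otherwise `CS(x)` or `CS(y)` is zero or their vertex sets meet, and both sides vanish.
-/

/-- The three cells of the interval: `[0]`, `[0,1]` (written `mid`), and `[1]`. -/
inductive CubeF : Type
  | zero : CubeF
  | mid : CubeF
  | one : CubeF
  deriving DecidableEq

namespace CartanSerre

/-- Basis elements of the cubical chain complex `C(□^n)`: tensors `x_1 ⊗ ⋯ ⊗ x_n`. -/
abbrev CubeB (n : ℕ) := Fin n → CubeF
/-- The cubical chain complex `C(□^n)` (as the free ℤ-module on its basis). -/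
abbrev CubeChain (n : ℕ) := CubeB n →₀ ℤ
/-- `C(□^n) ⊗ C(□^n)`, modeled as the free ℤ-module on pairs of basis elements. -/
abbrev CubeChain2 (n : ℕ) := (CubeB n × CubeB n) →₀ ℤ
/-- Basis elements of `C(Δ^n)`: strictly increasing tuples `[v_0, …, v_m]` with
`v_i ∈ {0,…,n}`, i.e. nonempty finite subsets of `Fin (n+1)` (`∅` is not used). -/
abbrev SimpB (n : ℕ) := Finset (Fin (n + 1))
/-- The normalized simplicial chain complex `C(Δ^n)`. -/
abbrev SimpChain (n : ℕ) := SimpB n →₀ ℤ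
/-- `C(Δ^n) ⊗ C(Δ^n)`. -/
abbrev SimpChain2 (n : ℕ) := (SimpB n × SimpB n) →₀ ℤ

/-- Degree of a cubical basis element: the number of factors equal to `[0,1]`. -/
def cubeDeg {n : ℕ} (x : CubeB n) : ℕ :=
  (Finset.univ.filter fun i => x i = CubeF.mid).card

/-- Degree of a simplicial basis element `[v_0, …, v_m]`, namely `m`. -/
def simpDeg {n : ℕ} (s : SimpB n) : ℕ := s.card - 1

/-- The cubical boundary on a basis element. -/
noncomputable def cubeBdFun (n : ℕ) (x : CubeB n) : CubeChain n :=
  ∑ i ∈ Finset.univ.filter (fun i => x i = CubeF.mid),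
    ((-1 : ℤ) ^ (Finset.univ.filter fun j => j < i ∧ x j = CubeF.mid).card) •
      (Finsupp.single (Function.update x i CubeF.one) 1 -
        Finsupp.single (Function.update x i CubeF.zero) 1)

/-- The cubical boundary `∂ : C(□^n) → C(□^n)`. -/
noncomputable def cubeBd (n : ℕ) : CubeChain n →ₗ[ℤ] CubeChain n :=
  Finsupp.lift (CubeChain n) ℤ (CubeB n) (cubeBdFun n)

/-- The (normalized) simplicial boundary on a basis element. -/
noncomputable def simpBdFun (n : ℕ) (s : SimpB n) : SimpChain n :=
  if 2 ≤ s.card then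
    ∑ v ∈ s, ((-1 : ℤ) ^ (s.filter fun w => w < v).card) • Finsupp.single (s.erase v) 1
  else 0

/-- The simplicial boundary `∂ : C(Δ^n) → C(Δ^n)`. -/
noncomputable def simpBd (n : ℕ) : SimpChain n →ₗ[ℤ] SimpChain n :=
  Finsupp.lift (SimpChain n) ℤ (SimpB n) (simpBdFun n)

/-- `p(x) - 1` (0-indexed): the first position of a factor `[0]`, or `n` if there is none. -/
def pIdx {n : ℕ} (x : CubeB n) : Fin (n + 1) :=
  ⟨(List.ofFn x).findIdx (fun c => decide (c = CubeF.zero)), by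
    have h : (List.ofFn x).findIdx (fun c => decide (c = CubeF.zero)) ≤ (List.ofFn x).length :=
      List.findIdx_le_length
    simp only [List.length_ofFn] at h
    omega⟩

/-- The vertex set `[q_1 - 1, …, q_m - 1, p(x) - 1]` of the image of `x` under `CS`. -/
def csSet {n : ℕ} (x : CubeB n) : SimpB n :=
  insert (pIdx x) ((Finset.univ.filter fun i => x i = CubeF.mid).image Fin.castSucc)

/-- The Cartan–Serre map `CS` on a cubical basis element. -/
noncomputable def csFun (n : ℕ) (x : CubeB n) : SimpChain n :=
  if ∃ i j : Fin n, i < j ∧ x i = CubeF.zero ∧ x j = CubeF.mid then 0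
  else Finsupp.single (csSet x) 1

/-- The Cartan–Serre chain map `CS : C(□^n) → C(Δ^n)`. -/
noncomputable def csL (n : ℕ) : CubeChain n →ₗ[ℤ] SimpChain n :=
  Finsupp.lift (SimpChain n) ℤ (CubeB n) (csFun n)

/-- The cubical counit `ε_□ : C(□^n) → ℤ`. -/
noncomputable def cubeEps (n : ℕ) : CubeChain n →ₗ[ℤ] ℤ :=
  Finsupp.lift ℤ ℤ (CubeB n) (fun x => if cubeDeg x = 0 then (1 : ℤ) else 0)

/-- The simplicial counit `ε_Δ : C(Δ^n) → ℤ`. -/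
noncomputable def simpEps (n : ℕ) : SimpChain n →ₗ[ℤ] ℤ :=
  Finsupp.lift ℤ ℤ (SimpB n) (fun s => if s.card = 1 then (1 : ℤ) else 0)

/-- Tensor product of two elements of free modules, in the product-basis model. -/
noncomputable def tensorF {α β : Type*} (a : α →₀ ℤ) (b : β →₀ ℤ) : (α × β) →₀ ℤ :=
  a.sum fun i r => b.sum fun j s => Finsupp.single (i, j) (r * s)

/-- Left factor of the Serre diagonal summand indexed by `S`:
factors in `S` contribute `[0,1]`, the other `[0,1]`-factors contribute `[0]`. -/
def serreL {n : ℕ} (x : CubeB n) (S : Finset (Fin n)) : CubeB n := fun i =>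
  if x i = CubeF.mid then (if i ∈ S then CubeF.mid else CubeF.zero) else x i

/-- Right factor of the Serre diagonal summand indexed by `S`. -/
def serreR {n : ℕ} (x : CubeB n) (S : Finset (Fin n)) : CubeB n := fun i =>
  if x i = CubeF.mid then (if i ∈ S then CubeF.one else CubeF.mid) else x i

/-- Koszul sign exponent of the Serre diagonal summand indexed by `S`. -/
def serreSign {n : ℕ} (x : CubeB n) (S : Finset (Fin n)) : ℕ :=
  ((Finset.univ : Finset (Fin n × Fin n)).filter fun p =>
    p.1 < p.2 ∧ x p.1 = CubeF.mid ∧ p.1 ∉ S ∧ p.2 ∈ S).card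

/-- The Serre diagonal `Δ_□` on a basis element: the tensor product (with Koszul
signs) of `Δ[0] = [0]⊗[0]`, `Δ[1] = [1]⊗[1]`, `Δ[0,1] = [0]⊗[0,1] + [0,1]⊗[1]`. -/
noncomputable def serreDiagFun (n : ℕ) (x : CubeB n) : CubeChain2 n :=
  ∑ S ∈ (Finset.univ.filter fun i => x i = CubeF.mid).powerset,
    ((-1 : ℤ) ^ serreSign x S) • Finsupp.single (serreL x S, serreR x S) 1

/-- The Serre diagonal `Δ_□ : C(□^n) → C(□^n) ⊗ C(□^n)`. -/
noncomputable def serreDiag (n : ℕ) : CubeChain n →ₗ[ℤ] CubeChain2 n :=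
  Finsupp.lift (CubeChain2 n) ℤ (CubeB n) (serreDiagFun n)

/-- The Alexander–Whitney coproduct on a basis element:
`Δ_AW [v_0,…,v_m] = Σ_i [v_0,…,v_i] ⊗ [v_i,…,v_m]`. -/
noncomputable def awFun (n : ℕ) (s : SimpB n) : SimpChain2 n :=
  ∑ v ∈ s, Finsupp.single (s.filter fun w => w ≤ v, s.filter fun w => v ≤ w) 1

/-- The Alexander–Whitney coproduct `Δ_AW : C(Δ^n) → C(Δ^n) ⊗ C(Δ^n)`. -/
noncomputable def awDiag (n : ℕ) : SimpChain n →ₗ[ℤ] SimpChain2 n :=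
  Finsupp.lift (SimpChain2 n) ℤ (SimpB n) (awFun n)

/-- `CS ⊗ CS : C(□^n) ⊗ C(□^n) → C(Δ^n) ⊗ C(Δ^n)` (no Koszul signs: `CS` has degree 0). -/
noncomputable def cs2L (n : ℕ) : CubeChain2 n →ₗ[ℤ] SimpChain2 n :=
  Finsupp.lift (SimpChain2 n) ℤ (CubeB n × CubeB n)
    (fun p => tensorF (csFun n p.1) (csFun n p.2))

/-- The join on single cube factors: `[0] ∗ [1] = [0,1]`, `[1] ∗ [0] = -[0,1]`,
all other joins of basis elements vanish (the outcome factor being `[0,1]`). -/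
def joinF : CubeF → CubeF → ℤ
  | CubeF.zero, CubeF.one => 1
  | CubeF.one, CubeF.zero => -1
  | _, _ => 0

/-- The cubical join `∗` on basis elements. -/
noncomputable def cubeJoinFun (n : ℕ) (x y : CubeB n) : CubeChain n :=
  ((-1 : ℤ) ^ cubeDeg x) •
    ∑ l : Fin n,
      ((if (∀ j, j < l → y j ≠ CubeF.mid) ∧ (∀ j, l < j → x j ≠ CubeF.mid) then (1 : ℤ) else 0) *
          joinF (x l) (y l)) •
        Finsupp.single (fun j => if j < l then x j else if j = l then CubeF.mid else y j) 1

/-- The cubical join, extended bilinearly to chains. -/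
noncomputable def cubeJoinC (n : ℕ) (a b : CubeChain n) : CubeChain n :=
  a.sum fun x r => b.sum fun y s => (r * s) • cubeJoinFun n x y

/-- The simplicial join `∗` on basis elements: `0` if the vertex sets meet, and
otherwise `(-1)^{p + |σ|}` times the union, `|σ|` counting the inversions. -/
noncomputable def simpJoinFun (n : ℕ) (s t : SimpB n) : SimpChain n :=
  if s ∩ t = ∅ ∧ s.Nonempty ∧ t.Nonempty then
    ((-1 : ℤ) ^ ((s.card - 1) + ((s ×ˢ t).filter fun p => p.2 < p.1).card)) •
      Finsupp.single (s ∪ t) 1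
  else 0

/-- The simplicial join, extended bilinearly to chains. -/
noncomputable def simpJoinC (n : ℕ) (a b : SimpChain n) : SimpChain n :=
  a.sum fun s r => b.sum fun t u => (r * u) • simpJoinFun n s t

/-- The linear order `[0] < [0,1] < [1]` on interval cells, via `0 < 1 < 2`. -/
def cellVal : CubeF → ℕ
  | CubeF.zero => 0
  | CubeF.mid => 1
  | CubeF.one => 2

/-- The componentwise partial order on cubical basis elements,
with `[0] < [0,1] < [1]` on each factor. -/
def cubeLe {n : ℕ} (x y : CubeB n) : Prop := ∀ i, cellVal (x i) ≤ cellVal (y i)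

/-- Left-parenthesized iterated join of a nonempty list (the base case `[]` is junk). -/
noncomputable def foldJoin {C : Type*} (join : C → C → C) (z : C) : List C → C
  | [] => z
  | a :: l => l.foldl join a

/-- Left-parenthesized iterated cubical join `∗^{k}` of `k+1` basis elements. -/
noncomputable def iterCubeJoin (n k : ℕ) (f : Fin (k + 1) → CubeB n) : CubeChain n :=
  foldJoin (cubeJoinC n) 0 (List.ofFn fun i : Fin (k + 1) => (Finsupp.single (f i) 1 : CubeChain n))

/-- Left-parenthesized iterated simplicial join `∗^{k}` of `k+1` chains. -/
noncomputable def iterSimpJoin (n k : ℕ) (g : Fin (k + 1) → SimpChain n) : SimpChain n :=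
  foldJoin (simpJoinC n) 0 (List.ofFn g)

/-- The iterated Serre diagonal `Δ_□^k` on a basis element, with `k+1` output factors
(iterated on the last factor; this is unambiguous by coassociativity, and no Koszul
signs appear since `Δ_□` has degree `0`). -/
noncomputable def serreIterFun (n : ℕ) : (k : ℕ) → CubeB n → ((Fin (k + 1) → CubeB n) →₀ ℤ)
  | 0, x => Finsupp.single (fun _ => x) 1
  | k + 1, x =>
    (serreIterFun n k x).sum fun f c =>
      (serreDiagFun n (f (Fin.last k))).sum fun p d =>
        Finsupp.single
          (fun i : Fin (k + 2) =>
            if h : (i : ℕ) < k then f ⟨(i : ℕ), by omega⟩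
            else if (i : ℕ) = k then p.1 else p.2) (c * d)

/-- The iterated Serre diagonal `Δ_□^k : C(□^n) → C(□^n)^{⊗(k+1)}`. -/
noncomputable def serreIter (n k : ℕ) : CubeChain n →ₗ[ℤ] ((Fin (k + 1) → CubeB n) →₀ ℤ) :=
  Finsupp.lift _ ℤ (CubeB n) (serreIterFun n k)

/-- The iterated Alexander–Whitney coproduct `Δ_AW^k` on a basis element. -/
noncomputable def awIterFun (n : ℕ) : (k : ℕ) → SimpB n → ((Fin (k + 1) → SimpB n) →₀ ℤ)
  | 0, s => Finsupp.single (fun _ => s) 1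
  | k + 1, s =>
    (awIterFun n k s).sum fun f c =>
      (awFun n (f (Fin.last k))).sum fun p d =>
        Finsupp.single
          (fun i : Fin (k + 2) =>
            if h : (i : ℕ) < k then f ⟨(i : ℕ), by omega⟩
            else if (i : ℕ) = k then p.1 else p.2) (c * d)

/-- The iterated Alexander–Whitney coproduct `Δ_AW^k : C(Δ^n) → C(Δ^n)^{⊗(k+1)}`. -/
noncomputable def awIter (n k : ℕ) : SimpChain n →ₗ[ℤ] ((Fin (k + 1) → SimpB n) →₀ ℤ) :=
  Finsupp.lift _ ℤ (SimpB n) (awIterFun n k)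

/-- The action of a permutation `τ` on a `k`-fold tensor of basis elements,
with the Koszul sign determined by the degrees of the factors it transposes. -/
noncomputable def koszulPermFun {α : Type*} (deg : α → ℕ) {k : ℕ} (τ : Equiv.Perm (Fin k))
    (f : Fin k → α) : (Fin k → α) →₀ ℤ :=
  ((-1 : ℤ) ^ ∑ p ∈ (Finset.univ : Finset (Fin k × Fin k)).filter
      (fun p => p.1 < p.2 ∧ τ p.2 < τ p.1), deg (f (τ p.1)) * deg (f (τ p.2))) •
    Finsupp.single (fun i => f (τ i)) 1

/-- The action of a permutation on `k`-fold tensors, with Koszul signs. -/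
noncomputable def koszulPerm {α : Type*} (deg : α → ℕ) {k : ℕ} (τ : Equiv.Perm (Fin k)) :
    ((Fin k → α) →₀ ℤ) →ₗ[ℤ] ((Fin k → α) →₀ ℤ) :=
  Finsupp.lift _ ℤ (Fin k → α) (koszulPermFun deg τ)

/-- Tensor product of an `r`-tuple of elements of a free module, product-basis model. -/
noncomputable def tensorPi {r : ℕ} {α : Type*} [DecidableEq α] (c : Fin r → (α →₀ ℤ)) :
    (Fin r → α) →₀ ℤ :=
  ∑ g ∈ Fintype.piFinset (fun i => (c i).support), Finsupp.single g (∏ i, (c i) (g i))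

/-- `CS^{⊗ r} : C(□^n)^{⊗ r} → C(Δ^n)^{⊗ r}` (no Koszul signs: `CS` has degree 0). -/
noncomputable def csTensor (n r : ℕ) : ((Fin r → CubeB n) →₀ ℤ) →ₗ[ℤ] ((Fin r → SimpB n) →₀ ℤ) :=
  Finsupp.lift _ ℤ (Fin r → CubeB n) (fun f => tensorPi fun i => csFun n (f i))

/-- The index in `Fin (k_1 + ⋯ + k_r)` of the `j`-th tensor factor of the `i`-th block. -/
def blockIdx {r : ℕ} (K : Fin r → ℕ) {m : ℕ} (hm : m + 1 = ∑ i, K i) (i : Fin r)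
    (j : Fin (K i)) : Fin (m + 1) :=
  ⟨(∑ j' ∈ Finset.univ.filter (fun j' => j' < i), K j') + (j : ℕ), by
    have h2 : (j : ℕ) < K i := j.isLt
    have h3 : K i + ∑ j' ∈ Finset.univ.filter (fun j' => j' < i), K j' ≤ ∑ i', K i' := by
      rw [← Finset.sum_insert (a := i) (s := Finset.univ.filter (fun j' => j' < i)) (by simp)]
      exact Finset.sum_le_sum_of_subset (Finset.subset_univ _)
    omega⟩

/-- A `(k_1, …, k_r)`-shuffle: a permutation increasing on each block. -/
def IsShuffle {r : ℕ} (K : Fin r → ℕ) {m : ℕ} (hm : m + 1 = ∑ i, K i)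
    (σ : Equiv.Perm (Fin (m + 1))) : Prop :=
  ∀ (i : Fin r) (j j' : Fin (K i)), j < j' → σ (blockIdx K hm i j) < σ (blockIdx K hm i j')

/-- Total degree of the `i`-th block of a `k`-fold cubical tensor. -/
def cubeBlockDeg {n r : ℕ} (K : Fin r → ℕ) {m : ℕ} (hm : m + 1 = ∑ i, K i)
    (f : Fin (m + 1) → CubeB n) (i : Fin r) : ℕ :=
  ∑ j : Fin (K i), cubeDeg (f (blockIdx K hm i j))

/-- Total degree of the `i`-th block of a `k`-fold simplicial tensor. -/
def simpBlockDeg {n r : ℕ} (K : Fin r → ℕ) {m : ℕ} (hm : m + 1 = ∑ i, K i)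
    (f : Fin (m + 1) → SimpB n) (i : Fin r) : ℕ :=
  ∑ j : Fin (K i), simpDeg (f (blockIdx K hm i j))

/-- `∗^{k_1 - 1} ⊗ ⋯ ⊗ ∗^{k_r - 1}` on a cubical `k`-fold tensor basis element, with
the Koszul sign for applying the degree-`(k_i - 1)` maps across the earlier blocks. -/
noncomputable def cubeBlockJoinFun (n r : ℕ) (K : Fin r → ℕ) {m : ℕ} (hm : m + 1 = ∑ i, K i)
    (f : Fin (m + 1) → CubeB n) : (Fin r → CubeB n) →₀ ℤ :=
  ((-1 : ℤ) ^ ∑ p ∈ (Finset.univ : Finset (Fin r × Fin r)).filter (fun p => p.1 < p.2),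
      (K p.2 - 1) * cubeBlockDeg K hm f p.1) •
    tensorPi (fun i : Fin r =>
      foldJoin (cubeJoinC n) 0
        (List.ofFn fun j : Fin (K i) => (Finsupp.single (f (blockIdx K hm i j)) 1 : CubeChain n)))

/-- `∗^{k_1 - 1} ⊗ ⋯ ⊗ ∗^{k_r - 1} : C(□^n)^{⊗ k} → C(□^n)^{⊗ r}`. -/
noncomputable def cubeBlockJoin (n r : ℕ) (K : Fin r → ℕ) {m : ℕ} (hm : m + 1 = ∑ i, K i) :
    ((Fin (m + 1) → CubeB n) →₀ ℤ) →ₗ[ℤ] ((Fin r → CubeB n) →₀ ℤ) :=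
  Finsupp.lift _ ℤ (Fin (m + 1) → CubeB n) (cubeBlockJoinFun n r K hm)

/-- `∗^{k_1 - 1} ⊗ ⋯ ⊗ ∗^{k_r - 1}` on a simplicial `k`-fold tensor basis element. -/
noncomputable def simpBlockJoinFun (n r : ℕ) (K : Fin r → ℕ) {m : ℕ} (hm : m + 1 = ∑ i, K i)
    (f : Fin (m + 1) → SimpB n) : (Fin r → SimpB n) →₀ ℤ :=
  ((-1 : ℤ) ^ ∑ p ∈ (Finset.univ : Finset (Fin r × Fin r)).filter (fun p => p.1 < p.2),
      (K p.2 - 1) * simpBlockDeg K hm f p.1) •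
    tensorPi (fun i : Fin r =>
      foldJoin (simpJoinC n) 0
        (List.ofFn fun j : Fin (K i) => (Finsupp.single (f (blockIdx K hm i j)) 1 : SimpChain n)))

/-- `∗^{k_1 - 1} ⊗ ⋯ ⊗ ∗^{k_r - 1} : C(Δ^n)^{⊗ k} → C(Δ^n)^{⊗ r}`. -/
noncomputable def simpBlockJoin (n r : ℕ) (K : Fin r → ℕ) {m : ℕ} (hm : m + 1 = ∑ i, K i) :
    ((Fin (m + 1) → SimpB n) →₀ ℤ) →ₗ[ℤ] ((Fin r → SimpB n) →₀ ℤ) :=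
  Finsupp.lift _ ℤ (Fin (m + 1) → SimpB n) (simpBlockJoinFun n r K hm)

/-- A chain is homogeneous of degree `m` if its support is contained in degree-`m` basis elements. -/
def cubeHomog (n m : ℕ) (c : CubeChain n) : Prop := ∀ x ∈ c.support, cubeDeg x = m

/-- A simplicial chain is homogeneous of degree `m` if every basis element in its
support is a strictly increasing tuple `[v_0, …, v_m]`, i.e. has `m+1` vertices. -/
def simpHomog (n m : ℕ) (c : SimpChain n) : Prop := ∀ s ∈ c.support, s.card = m + 1

variable {n : ℕ}

lemma pIdx_eq_castSucc {x : CubeB n} {l : Fin n} (hl : x l = .zero)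
    (h : ∀ j < l, x j ≠ .zero) : pIdx x = l.castSucc := by
  apply Fin.ext
  show List.findIdx _ _ = _
  rw [List.findIdx_eq (by simp)]
  simpa [hl] using fun j hj => h ⟨j, by omega⟩ hj

lemma pIdx_eq_last {x : CubeB n} (h : ∀ j, x j ≠ .zero) : pIdx x = Fin.last n := by
  apply Fin.ext
  show List.findIdx _ _ = _
  rw [List.findIdx_eq_length_of_false (by simpa [List.mem_ofFn] using h), List.length_ofFn]
  rfl

lemma pIdx_cases (x : CubeB n) :
    (∃ l, x l = .zero ∧ (∀ j < l, x j ≠ .zero) ∧ pIdx x = l.castSucc) ∨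
      ((∀ j, x j ≠ .zero) ∧ pIdx x = Fin.last n) := by
  by_cases h : ∃ j, x j = .zero
  · obtain ⟨l, hl, hmin⟩ := (Finset.univ.filter (x · = .zero)).exists_min_image id
      (by obtain ⟨j, hj⟩ := h; exact ⟨j, by simpa using hj⟩)
    simp only [Finset.mem_filter, Finset.mem_univ, true_and, id] at hl hmin
    have hlt : ∀ j < l, x j ≠ .zero := fun j hj hj0 => (hmin j hj0).not_gt hj
    exact Or.inl ⟨l, hl, hlt, pIdx_eq_castSucc hl hlt⟩
  · push Not at h
    exact Or.inr ⟨h, pIdx_eq_last h⟩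

lemma pIdx_congr {x y : CubeB n} (h : ∀ j, x j = .zero ↔ y j = .zero) : pIdx x = pIdx y := by
  rcases pIdx_cases x with ⟨l, hl, hmin, hx⟩ | ⟨hnz, hx⟩
  · rw [hx, pIdx_eq_castSucc ((h l).1 hl) fun j hj hy => hmin j hj ((h j).2 hy)]
  · rw [hx, pIdx_eq_last fun j hy => hnz j ((h j).2 hy)]

lemma pIdx_mem_csSet (x : CubeB n) : pIdx x ∈ csSet x := Finset.mem_insert_self _ _

lemma castSucc_mem_csSet {x : CubeB n} {i : Fin n} (h : x i = .mid) : i.castSucc ∈ csSet x :=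
  Finset.mem_insert_of_mem (Finset.mem_image_of_mem _ (by simpa using h))

lemma mem_csSet {x : CubeB n} {a : Fin (n + 1)} :
    a ∈ csSet x ↔ a = pIdx x ∨ ∃ i, x i = .mid ∧ i.castSucc = a := by
  simp [csSet]

lemma card_csSet (x : CubeB n) : (csSet x).card = cubeDeg x + 1 := by
  rw [csSet, Finset.card_insert_of_notMem,
    Finset.card_image_of_injective _ (Fin.castSucc_injective n)]
  · rfl
  simp only [Finset.mem_image, Finset.mem_filter, Finset.mem_univ, true_and, not_exists, not_and]
  intro i hi he
  rcases pIdx_cases x with ⟨l, hl, -, hpx⟩ | ⟨-, hpx⟩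
  · rw [hpx, (Fin.castSucc_injective n).eq_iff] at he
    rw [he, hl] at hi
    cases hi
  · exact (Fin.castSucc_lt_last i).ne (he.trans hpx)

def HasZeroBeforeMid (z : CubeB n) : Prop := ∃ i j : Fin n, i < j ∧ z i = .zero ∧ z j = .mid

lemma csFun_of_hasZeroBeforeMid {z : CubeB n} (h : HasZeroBeforeMid z) : csFun n z = 0 :=
  if_pos h

lemma csFun_of_not_hasZeroBeforeMid {z : CubeB n} (h : ¬ HasZeroBeforeMid z) :
    csFun n z = Finsupp.single (csSet z) 1 :=
  if_neg h

lemma csL_single (z : CubeB n) (c : ℤ) : csL n (Finsupp.single z c) = c • csFun n z := by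
  rw [csL, Finsupp.lift_apply, Finsupp.sum_single_index (zero_smul ℤ (csFun n z))]

def splice (x y : CubeB n) (l : Fin n) : CubeB n :=
  fun j => if j < l then x j else if j = l then .mid else y j

section splice

variable {x y : CubeB n} {j l : Fin n}

lemma splice_of_lt (h : j < l) : splice x y l j = x j := if_pos h

@[simp] lemma splice_self : splice x y l l = .mid := by simp [splice]

lemma splice_of_gt (h : l < j) : splice x y l j = y j := by simp [splice, h.not_gt, h.ne']

end splice

def joinCoeff (x y : CubeB n) (l : Fin n) : ℤ :=
  (if (∀ j, j < l → y j ≠ .mid) ∧ (∀ j, l < j → x j ≠ .mid) then 1 else 0) * joinF (x l) (y l)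

lemma csL_cubeJoinFun (x y : CubeB n) :
    csL n (cubeJoinFun n x y) =
      (-1 : ℤ) ^ cubeDeg x • ∑ l, joinCoeff x y l • csFun n (splice x y l) := by
  simp only [cubeJoinFun, map_smul, map_sum, csL_single, one_smul]
  rfl

lemma zero_of_cubeLe {x y : CubeB n} (h : cubeLe x y) {i : Fin n} (hy : y i = .zero) :
    x i = .zero := by
  have := h i
  rw [hy] at this
  cases hx : x i <;> simp_all [cellVal]

lemma eq_zero_and_eq_one_of_joinF_ne_zero {a b : CubeF} (hab : cellVal a ≤ cellVal b)
    (h : joinF a b ≠ 0) : a = .zero ∧ b = .one := by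
  cases a <;> cases b <;> simp_all [joinF, cellVal]

lemma simpJoinC_single (s t : SimpB n) (a b : ℤ) :
    simpJoinC n (Finsupp.single s a) (Finsupp.single t b) = (a * b) • simpJoinFun n s t := by
  rw [simpJoinC, Finsupp.sum_single_index (by simp), Finsupp.sum_single_index (by simp)]

lemma simpJoinC_zero_left (b : SimpChain n) : simpJoinC n 0 b = 0 :=
  Finsupp.sum_zero_index

lemma simpJoinC_zero_right (a : SimpChain n) : simpJoinC n a 0 = 0 := by
  simp [simpJoinC]

lemma simpJoinFun_of_lt {s t : SimpB n} (hs : s.Nonempty) (ht : t.Nonempty)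
    (h : ∀ a ∈ s, ∀ b ∈ t, a < b) :
    simpJoinFun n s t = (-1 : ℤ) ^ (s.card - 1) • Finsupp.single (s ∪ t) 1 := by
  have hdisj : s ∩ t = ∅ := Finset.disjoint_iff_inter_eq_empty.mp
    (Finset.disjoint_left.mpr fun a ha hat => (h a ha a hat).false)
  have hinv : (s ×ˢ t).filter (fun p => p.2 < p.1) = ∅ := Finset.filter_eq_empty_iff.mpr
    fun p hp => (h _ (Finset.mem_product.mp hp).1 _ (Finset.mem_product.mp hp).2).asymm
  rw [simpJoinFun, if_pos ⟨hdisj, hs, ht⟩, hinv, Finset.card_empty, add_zero]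

lemma simpJoinFun_of_not_disjoint {s t : SimpB n} (h : ¬ Disjoint s t) : simpJoinFun n s t = 0 :=
  if_neg fun hst => h (Finset.disjoint_iff_inter_eq_empty.mpr hst.1)

/-- `l` indexes the one summand of `x ∗ y` that can survive `CS`. -/
structure IsJoinPos (x y : CubeB n) (l : Fin n) : Prop where
  left_eq_zero : x l = .zero
  right_eq_one : y l = .one
  left_ne_zero_of_lt : ∀ j < l, x j ≠ .zero
  lt_of_left_eq_mid : ∀ j, x j = .mid → j < l
  gt_of_right_eq_mid : ∀ j, y j = .mid → l < j

namespace IsJoinPos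

variable {x y : CubeB n} {l : Fin n}

lemma eq {l' : Fin n} (hl : IsJoinPos x y l) (hl' : IsJoinPos x y l') : l = l' := by
  rcases lt_trichotomy l l' with h | h | h
  · exact absurd hl.left_eq_zero (hl'.left_ne_zero_of_lt l h)
  · exact h
  · exact absurd hl'.left_eq_zero (hl.left_ne_zero_of_lt l' h)

lemma joinCoeff_eq_one (hl : IsJoinPos x y l) : joinCoeff x y l = 1 := by
  have hcond : (∀ j, j < l → y j ≠ .mid) ∧ (∀ j, l < j → x j ≠ .mid) :=
    ⟨fun j hj hy => (hl.gt_of_right_eq_mid j hy).asymm hj,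
      fun j hj hx => (hl.lt_of_left_eq_mid j hx).asymm hj⟩
  rw [joinCoeff, if_pos hcond, hl.left_eq_zero, hl.right_eq_one]
  rfl

lemma splice_eq_zero_iff (hl : IsJoinPos x y l) (hxy : cubeLe x y) (j : Fin n) :
    splice x y l j = .zero ↔ y j = .zero := by
  rcases lt_trichotomy j l with h | rfl | h
  · rw [splice_of_lt h]
    exact iff_of_false (hl.left_ne_zero_of_lt j h)
      fun hy => hl.left_ne_zero_of_lt j h (zero_of_cubeLe hxy hy)
  · simp [hl.right_eq_one]
  · rw [splice_of_gt h]

lemma splice_eq_mid_iff (hl : IsJoinPos x y l) (j : Fin n) :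
    splice x y l j = .mid ↔ x j = .mid ∨ j = l ∨ y j = .mid := by
  rcases lt_trichotomy j l with h | rfl | h
  · have := hl.gt_of_right_eq_mid j
    rw [splice_of_lt h]
    grind
  · simp
  · have := hl.lt_of_left_eq_mid j
    rw [splice_of_gt h]
    grind

lemma csSet_splice (hl : IsJoinPos x y l) (hxy : cubeLe x y) :
    csSet (splice x y l) = csSet x ∪ csSet y := by
  have hpx : pIdx x = l.castSucc :=
    pIdx_eq_castSucc hl.left_eq_zero hl.left_ne_zero_of_lt
  have hps : pIdx (splice x y l) = pIdx y := pIdx_congr (hl.splice_eq_zero_iff hxy)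
  ext a
  simp only [Finset.mem_union, mem_csSet, hpx, hps, hl.splice_eq_mid_iff]
  grind

lemma not_hasZeroBeforeMid_splice (hl : IsJoinPos x y l) (hy : ¬ HasZeroBeforeMid y) :
    ¬ HasZeroBeforeMid (splice x y l) := by
  rintro ⟨i, j, hij, hi, hj⟩
  rcases lt_trichotomy i l with h | rfl | h
  · exact hl.left_ne_zero_of_lt i h (by rwa [splice_of_lt h] at hi)
  · simp at hi
  · exact hy ⟨i, j, hij, by rwa [splice_of_gt h] at hi, by rwa [splice_of_gt (h.trans hij)] at hj⟩

lemma castSucc_lt_pIdx (hl : IsJoinPos x y l) (hxy : cubeLe x y) : l.castSucc < pIdx y := by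
  rcases pIdx_cases y with ⟨l', hl', -, hpy⟩ | ⟨-, hpy⟩
  · rw [hpy, Fin.castSucc_lt_castSucc_iff]
    rcases lt_trichotomy l' l with h | rfl | h
    · exact absurd (zero_of_cubeLe hxy hl') (hl.left_ne_zero_of_lt l' h)
    · rw [hl.right_eq_one] at hl'
      cases hl'
    · exact h
  · rw [hpy]
    exact Fin.castSucc_lt_last l

lemma csSet_lt (hl : IsJoinPos x y l) (hxy : cubeLe x y) :
    ∀ a ∈ csSet x, ∀ b ∈ csSet y, a < b := by
  have hx : ∀ a ∈ csSet x, a ≤ l.castSucc := by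
    intro a ha
    rcases mem_csSet.mp ha with rfl | ⟨i, hi, rfl⟩
    · exact (pIdx_eq_castSucc hl.left_eq_zero hl.left_ne_zero_of_lt).le
    · exact Fin.castSucc_le_castSucc_iff.mpr (hl.lt_of_left_eq_mid i hi).le
  have hy : ∀ b ∈ csSet y, l.castSucc < b := by
    intro b hb
    rcases mem_csSet.mp hb with rfl | ⟨i, hi, rfl⟩
    · exact hl.castSucc_lt_pIdx hxy
    · exact Fin.castSucc_lt_castSucc_iff.mpr (hl.gt_of_right_eq_mid i hi)
  exact fun a ha b hb => (hx a ha).trans_lt (hy b hb)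

lemma joinCoeff_smul_csFun_splice (hl : IsJoinPos x y l) (hxy : cubeLe x y)
    (hy : ¬ HasZeroBeforeMid y) :
    joinCoeff x y l • csFun n (splice x y l) = Finsupp.single (csSet x ∪ csSet y) 1 := by
  rw [hl.joinCoeff_eq_one, one_smul,
    csFun_of_not_hasZeroBeforeMid (hl.not_hasZeroBeforeMid_splice hy), hl.csSet_splice hxy]

lemma simpJoinC_csFun (hl : IsJoinPos x y l) (hxy : cubeLe x y) (hx : ¬ HasZeroBeforeMid x)
    (hy : ¬ HasZeroBeforeMid y) :
    simpJoinC n (csFun n x) (csFun n y) =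
      (-1 : ℤ) ^ cubeDeg x • Finsupp.single (csSet x ∪ csSet y) 1 := by
  rw [csFun_of_not_hasZeroBeforeMid hx, csFun_of_not_hasZeroBeforeMid hy, simpJoinC_single,
    one_mul, one_smul, simpJoinFun_of_lt ⟨_, pIdx_mem_csSet x⟩ ⟨_, pIdx_mem_csSet y⟩
      (hl.csSet_lt hxy), card_csSet, Nat.add_sub_cancel]

end IsJoinPos

lemma isJoinPos_of_smul_csFun_splice_ne_zero {x y : CubeB n} {l : Fin n} (hxy : cubeLe x y)
    (h : joinCoeff x y l • csFun n (splice x y l) ≠ 0) :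
    IsJoinPos x y l ∧ ¬ HasZeroBeforeMid x ∧ ¬ HasZeroBeforeMid y := by
  have hs : ¬ HasZeroBeforeMid (splice x y l) := fun hz =>
    h (by rw [csFun_of_hasZeroBeforeMid hz, smul_zero])
  have hc : joinCoeff x y l ≠ 0 := left_ne_zero_of_smul h
  rw [joinCoeff, ite_mul, one_mul, zero_mul] at hc
  obtain ⟨⟨hymid, hxmid⟩, hjoin⟩ := (ite_ne_right_iff).mp hc
  obtain ⟨hx0, hy1⟩ := eq_zero_and_eq_one_of_joinF_ne_zero (hxy l) hjoin
  have hxlt : ∀ j < l, x j ≠ .zero := fun j hj hxj =>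
    hs ⟨j, l, hj, by rw [splice_of_lt hj, hxj], splice_self⟩
  have hl : IsJoinPos x y l :=
    { left_eq_zero := hx0
      right_eq_one := hy1
      left_ne_zero_of_lt := hxlt
      lt_of_left_eq_mid := fun j hj => by
        rcases lt_trichotomy j l with h | rfl | h
        · exact h
        · simp [hx0] at hj
        · exact absurd hj (hxmid j h)
      gt_of_right_eq_mid := fun j hj => by
        rcases lt_trichotomy j l with h | rfl | h
        · exact absurd hj (hymid j h)
        · simp [hy1] at hj
        · exact h }
  refine ⟨hl, ?_, ?_⟩
  · rintro ⟨i, j, hij, hi, hj⟩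
    exact hxlt i (hij.trans (hl.lt_of_left_eq_mid j hj)) hi
  · rintro ⟨i, j, hij, hi, hj⟩
    rcases lt_trichotomy i l with h | rfl | h
    · exact hxlt i h (zero_of_cubeLe hxy hi)
    · simp [hy1] at hi
    · exact hs ⟨i, j, hij, by rwa [splice_of_gt h], by rwa [splice_of_gt (h.trans hij)]⟩

lemma exists_isJoinPos_of_disjoint {x y : CubeB n} (hxy : cubeLe x y)
    (hx : ¬ HasZeroBeforeMid x) (h : Disjoint (csSet x) (csSet y)) : ∃ l, IsJoinPos x y l := by
  have hnot : ∀ a ∈ csSet x, a ∉ csSet y := fun _ ha => Finset.disjoint_left.mp h ha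
  rcases pIdx_cases x with ⟨l, hl, hmin, hpx⟩ | ⟨hnz, hpx⟩
  · have hlx : l.castSucc ∈ csSet x := hpx ▸ pIdx_mem_csSet x
    have hy1 : y l = .one := by
      cases hyl : y l with
      | zero =>
        have hpy := pIdx_eq_castSucc hyl fun j hj hyj => hmin j hj (zero_of_cubeLe hxy hyj)
        exact absurd (hpy ▸ pIdx_mem_csSet y) (hnot _ hlx)
      | mid => exact absurd (castSucc_mem_csSet hyl) (hnot _ hlx)
      | one => rfl
    refine ⟨l, hl, hy1, hmin, fun j hj => ?_, fun j hj => ?_⟩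
    · rcases lt_trichotomy j l with h | rfl | h
      · exact h
      · simp [hl] at hj
      · exact absurd ⟨l, j, h, hl, hj⟩ hx
    · rcases lt_trichotomy j l with h | rfl | h
      · have hxj := hxy j
        rw [hj] at hxj
        cases hxj' : x j
        · exact absurd hxj' (hmin j h)
        · exact absurd (castSucc_mem_csSet hj) (hnot _ (castSucc_mem_csSet hxj'))
        · simp [hxj', cellVal] at hxj
      · simp [hy1] at hj
      · exact h
  · have hpy := pIdx_eq_last fun j hyj => hnz j (zero_of_cubeLe hxy hyj)
    exact absurd (hpy ▸ pIdx_mem_csSet y) (hnot _ (hpx ▸ pIdx_mem_csSet x))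

end CartanSerre

open CartanSerre in
/-- If `x ≤ y` in the componentwise partial order on the basis of
`C(□^n)`, then `CS(x ∗ y) = CS(x) ∗ CS(y)` (cubical join on the left, simplicial join
on the right). -/
theorem cartanSerre_join_of_le (n : ℕ) (x y : CubeB n) (h : cubeLe x y) :
    csL n (cubeJoinFun n x y) = simpJoinC n (csFun n x) (csFun n y) := by
  rw [csL_cubeJoinFun]
  by_cases hpos : ∃ l, IsJoinPos x y l ∧ ¬ HasZeroBeforeMid x ∧ ¬ HasZeroBeforeMid y
  · obtain ⟨l, hl, hx, hy⟩ := hpos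
    have hsum : ∑ l', joinCoeff x y l' • csFun n (splice x y l') =
        joinCoeff x y l • csFun n (splice x y l) :=
      Finset.sum_eq_single l (fun l' _ hne => by_contra fun h' =>
        hne ((isJoinPos_of_smul_csFun_splice_ne_zero h h').1.eq hl)) (by simp)
    rw [hsum, hl.joinCoeff_smul_csFun_splice h hy, hl.simpJoinC_csFun h hx hy]
  · have hsum : ∑ l, joinCoeff x y l • csFun n (splice x y l) = 0 :=
      Finset.sum_eq_zero fun l _ => by_contra fun h' =>
        hpos ⟨l, isJoinPos_of_smul_csFun_splice_ne_zero h h'⟩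
    rw [hsum, smul_zero]
    by_cases hx : HasZeroBeforeMid x
    · rw [csFun_of_hasZeroBeforeMid hx, simpJoinC_zero_left]
    by_cases hy : HasZeroBeforeMid y
    · rw [csFun_of_hasZeroBeforeMid hy, simpJoinC_zero_right]
    have hmeet : ¬ Disjoint (csSet x) (csSet y) := fun hdisj =>
      have ⟨l, hl⟩ := exists_isJoinPos_of_disjoint h hx hdisj
      hpos ⟨l, hl, hx, hy⟩
    rw [csFun_of_not_hasZeroBeforeMid hx, csFun_of_not_hasZeroBeforeMid hy, simpJoinC_single,
      simpJoinFun_of_not_disjoint hmeet, smul_zero]
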